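/- Let κ₀ ∈ ℝ and κ₁ > 0. For every θ ∈ (1/2, 1), one has τ(θ)^{θ−1} ≤ ϱ(κ₀,κ₁). -/
import Mathlib


/-- `r(θ) = 1 − κ₁(θ − 1/2)(θ − 1)`. -/
noncomputable def rfun (κ₁ θ : ℝ) : ℝ := 1 - κ₁ * (θ - 1/2) * (θ - 1)

/-- `τ(θ) = exp(1 + κ₀ − r(θ)/(2(1 − θ)))`. -/
noncomputable def tau (κ₀ κ₁ θ : ℝ) : ℝ :=
  Real.exp (1 + κ₀ - rfun κ₁ θ / (2 * (1 - θ)))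

/-- The constant `ϱ(κ₀,κ₁)` from formula (5.3) of the paper. -/
noncomputable def varrho (κ₀ κ₁ : ℝ) : ℝ :=
  if (κ₀ + 1) / κ₁ > 1/4 then Real.exp (1/2)
  else if (κ₀ + 1) / κ₁ < -(1/4) then Real.exp (-κ₀ / 2)
  else Real.exp ((16 * κ₀ ^ 2 - 8 * κ₀ * (κ₁ - 4) + (4 + κ₁) ^ 2) / (32 * κ₁))

/-- Uniform boundedness of the error-bound constant:
`τ(θ)^{θ−1} ≤ ϱ(κ₀,κ₁)` for every `θ ∈ (1/2,1)`. -/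
theorem tau_rpow_le_varrho (κ₀ κ₁ : ℝ) (hκ₁ : 0 < κ₁)
    (θ : ℝ) (hθ : θ ∈ Set.Ioo (1/2 : ℝ) 1) :
    tau κ₀ κ₁ θ ^ (θ - 1) ≤ varrho κ₀ κ₁ := by
  obtain ⟨hθ1, hθ2⟩ := hθ
  have h1θ : 0 < 1 - θ := by linarith
  have hLHS : tau κ₀ κ₁ θ ^ (θ - 1)
      = Real.exp ((1 + κ₀) * (θ - 1) + rfun κ₁ θ / 2) := by
    rw [tau, ← Real.exp_mul]
    congr 1
    field_simp
    ring
  rw [hLHS, varrho, rfun]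
  split_ifs with h1 h2
  · rw [Real.exp_le_exp]
    have h1' : κ₁ / 4 < κ₀ + 1 := by
      rw [gt_iff_lt, div_lt_div_iff₀ (by norm_num) hκ₁] at h1
      linarith
    nlinarith [mul_pos h1θ hκ₁, mul_pos (mul_pos h1θ hκ₁) h1θ]
  · rw [Real.exp_le_exp]
    have h2' : κ₀ + 1 < -(κ₁ / 4) := by
      rw [div_lt_iff₀ hκ₁] at h2
      linarith
    have hfac : 0 < -1 - κ₀ - κ₁ / 2 + κ₁ * θ / 2 := by nlinarith
    nlinarith [mul_pos (show (0:ℝ) < θ - 1/2 by linarith) hfac]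
  · rw [Real.exp_le_exp, le_div_iff₀ (by positivity : (0:ℝ) < 32 * κ₁)]
    nlinarith [sq_nonneg ((κ₁ / 4 - 1 - κ₀) - κ₁ * (1 - θ)), hκ₁.le]
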